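/- arXiv:2012.09106 — 2 statements merged into one kernel-verified Lean document; each statement's English description precedes it below -/
import Mathlib

section
/- Let M ≥ 1, let P ∈ ℂ^{M×M} be positive semidefinite, and let κ ≥ 0 be real. Then det(I + κP) is a real number ≥ 1, and log₂((det(I + κP)).re) ≤ M · log₂(1 + κ·(tr P).re / M). -/
open Matrix Finset
open scoped ComplexOrder

/-! Diagonalising `P` by a unitary turns `det (I + κP)` into `∏ᵢ (1 + κμᵢ)` and `tr P` into
`∑ᵢ μᵢ`, where the eigenvalues `μᵢ` are nonnegative; the bound is then AM–GM for the factors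
`1 + κμᵢ`. -/

theorem Real.prod_le_arith_mean_pow {ι : Type*} (s : Finset ι) (z : ι → ℝ)
    (hz : ∀ i ∈ s, 0 ≤ z i) : ∏ i ∈ s, z i ≤ ((∑ i ∈ s, z i) / #s) ^ #s := by
  rcases s.eq_empty_or_nonempty with rfl | hs
  · simp
  have hamgm := Real.geom_mean_le_arith_mean s (fun _ ↦ 1) z (fun _ _ ↦ zero_le_one)
    (by simpa using hs.card_pos) hz
  simp only [Real.rpow_one, sum_const, nsmul_eq_mul, mul_one, one_mul] at hamgm
  calc ∏ i ∈ s, z i = ((∏ i ∈ s, z i) ^ (#s : ℝ)⁻¹) ^ #s :=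
        (Real.rpow_inv_natCast_pow (prod_nonneg hz) (by positivity)).symm
    _ ≤ ((∑ i ∈ s, z i) / #s) ^ #s := by
        gcongr
        exact Real.rpow_nonneg (prod_nonneg hz) _

theorem Real.prod_one_add_le_one_add_arith_mean_pow {ι : Type*} (s : Finset ι) (x : ι → ℝ)
    (hx : ∀ i ∈ s, -1 ≤ x i) : ∏ i ∈ s, (1 + x i) ≤ (1 + (∑ i ∈ s, x i) / #s) ^ #s := by
  rcases s.eq_empty_or_nonempty with rfl | hs
  · simp
  have hcard : (#s : ℝ) ≠ 0 := by positivity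
  have hmean : (∑ i ∈ s, (1 + x i)) / #s = 1 + (∑ i ∈ s, x i) / #s := by
    rw [sum_add_distrib, sum_const, nsmul_one, add_div, div_self hcard]
  rw [← hmean]
  exact Real.prod_le_arith_mean_pow s _ fun i hi ↦ by linarith [hx i hi]

theorem Matrix.det_conjStarAlgAut {R n : Type*} [CommRing R] [StarRing R] [Fintype n]
    [DecidableEq n] (U : unitary (Matrix n n R)) (X : Matrix n n R) :
    det (Unitary.conjStarAlgAut R _ U X) = det X := by
  rw [Unitary.conjStarAlgAut_apply, det_mul, det_mul, mul_right_comm, ← det_mul,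
    Unitary.mul_star_self_of_mem U.2, det_one, one_mul]

theorem Matrix.IsHermitian.det_one_add_smul {𝕜 n : Type*} [RCLike 𝕜] [Fintype n] [DecidableEq n]
    {A : Matrix n n 𝕜} (hA : A.IsHermitian) (c : ℝ) :
    det (1 + (c : 𝕜) • A) = ∏ i, ((1 + c * hA.eigenvalues i : ℝ) : 𝕜) := by
  conv_lhs => rw [hA.spectral_theorem]
  rw [← map_one (Unitary.conjStarAlgAut 𝕜 _ hA.eigenvectorUnitary), ← map_smul, ← map_add,
    det_conjStarAlgAut, ← diagonal_one, ← diagonal_smul, diagonal_add, det_diagonal]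
  simp

theorem logb_det_le_of_posSemidef_general
    (M : ℕ) (P : Matrix (Fin M) (Fin M) ℂ)
    (hP : P.PosSemidef) (κ : ℝ) (hκ : 0 ≤ κ) :
    ((1 : Matrix (Fin M) (Fin M) ℂ) + (κ : ℂ) • P).det.im = 0 ∧
    1 ≤ ((1 : Matrix (Fin M) (Fin M) ℂ) + (κ : ℂ) • P).det.re ∧
    Real.logb 2 (((1 : Matrix (Fin M) (Fin M) ℂ) + (κ : ℂ) • P).det.re) ≤
      (M : ℝ) * Real.logb 2 (1 + κ * P.trace.re / (M : ℝ)) := by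
  set μ := hP.isHermitian.eigenvalues
  have hdet : ((1 : Matrix (Fin M) (Fin M) ℂ) + (κ : ℂ) • P).det = ∏ i, (1 + κ * μ i : ℝ) := by
    simpa using hP.isHermitian.det_one_add_smul κ
  have htrace : κ * P.trace.re = ∑ i, κ * μ i := by
    simp [hP.isHermitian.trace_eq_sum_eigenvalues, mul_sum, μ]
  have hone_le : ∀ i, 1 ≤ 1 + κ * μ i := fun i ↦
    le_add_of_nonneg_right (mul_nonneg hκ (hP.eigenvalues_nonneg i))
  have hprod : 1 ≤ ∏ i, (1 + κ * μ i) := one_le_prod fun i _ ↦ hone_le i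
  rw [hdet, Complex.ofReal_re, Complex.ofReal_im]
  refine ⟨rfl, hprod, ?_⟩
  calc Real.logb 2 (∏ i, (1 + κ * μ i))
      ≤ Real.logb 2 ((1 + κ * P.trace.re / M) ^ M) := by
        refine Real.logb_le_logb_of_le one_lt_two (zero_lt_one.trans_le hprod) ?_
        simpa [htrace] using
          Real.prod_one_add_le_one_add_arith_mean_pow univ (fun i ↦ κ * μ i)
            fun i _ ↦ by linarith [hone_le i]
    _ = M * Real.logb 2 (1 + κ * P.trace.re / M) := Real.logb_pow 2 _ M

/-- For positive semidefinite `P` and `κ ≥ 0`, `det(I + κP)` is a real number `≥ 1`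
and `log₂ det(I + κP) ≤ M log₂(1 + κ tr(P)/M)`. -/
theorem logb_det_le_of_posSemidef
    (M : ℕ) (hM : 1 ≤ M) (P : Matrix (Fin M) (Fin M) ℂ)
    (hP : P.PosSemidef) (κ : ℝ) (hκ : 0 ≤ κ) :
    ((1 : Matrix (Fin M) (Fin M) ℂ) + (κ : ℂ) • P).det.im = 0 ∧
    1 ≤ ((1 : Matrix (Fin M) (Fin M) ℂ) + (κ : ℂ) • P).det.re ∧
    Real.logb 2 (((1 : Matrix (Fin M) (Fin M) ℂ) + (κ : ℂ) • P).det.re) ≤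
      (M : ℝ) * Real.logb 2 (1 + κ * P.trace.re / (M : ℝ)) :=
  logb_det_le_of_posSemidef_general M P hP κ hκ
end

section
/- Let (Ω, μ) be a probability space, M ≥ 1, κ ≥ 0, and let P : Ω → ℂ^{M×M} be a random matrix such that P(ω) is positive semidefinite for every ω, the real-valued function ω ↦ (tr P(ω)).re is integrable, and ω ↦ log₂((det(I + κP(ω))).re) is integrable. Then ∫ log₂((det(I + κP(ω))).re) dμ(ω) ≤ M · log₂(1 + κ·(∫ (tr P(ω)).re dμ(ω)) / M). (Proposition: applied with P(ω) = (WᴴH(ω)V)(WᴴH(ω)V)ᴴ and M the number of receive beams, this upper-bounds the average spectral efficiency of single-user SVD precoding by M·log₂(1 + κ·tr(Σ̄)/M), where Σ̄ is the effective channel covariance.) -/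
open Matrix MeasureTheory
open scoped ComplexOrder

/-!
Everything follows from the tangent-line bound `log y ≤ log a + (y - a) / a` for the concave
logarithm. Applied to the eigenvalues of `I + κ P(ω)`, all at the same point
`a = 1 + κ 𝔼[tr P] / M`, it bounds `log det (I + κ P(ω))` by a function that is affine in
`tr P(ω)` and whose expectation is exactly `M log a`. This one tangent line thus does the work
of both AM-GM over the eigenvalues and Jensen's inequality over `ω`.
-/

theorem Real.log_le_log_add_sub_div {a y : ℝ} (ha : 0 < a) (hy : 0 < y) :
    Real.log y ≤ Real.log a + (y - a) / a := by
  have h := Real.log_le_sub_one_of_pos (div_pos hy ha)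
  rw [Real.log_div hy.ne' ha.ne'] at h
  rw [sub_div, div_self ha.ne']
  linarith

theorem MeasureTheory.integral_le_of_forall_le_add_mul_sub_integral
    {Ω : Type*} [MeasurableSpace Ω] {μ : Measure Ω} [IsProbabilityMeasure μ] {f g : Ω → ℝ}
    (hf : Integrable f μ) (hg : Integrable g μ) {C s : ℝ}
    (h : ∀ ω, g ω ≤ C + s * (f ω - ∫ x, f x ∂μ)) :
    ∫ ω, g ω ∂μ ≤ C := by
  have hf' : Integrable (fun ω => f ω - ∫ x, f x ∂μ) μ := hf.sub (integrable_const _)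
  calc ∫ ω, g ω ∂μ ≤ ∫ ω, C + s * (f ω - ∫ x, f x ∂μ) ∂μ :=
        integral_mono hg ((integrable_const C).add (hf'.const_mul s)) h
    _ = C := by
      rw [integral_add (integrable_const C) (hf'.const_mul s), integral_const_mul,
        integral_sub hf (integrable_const _)]
      simp

namespace Matrix

variable {n 𝕜 : Type*} [Fintype n] [DecidableEq n] [RCLike 𝕜]

theorem PosDef.log_det_le {A : Matrix n n 𝕜} (hA : A.PosDef) {a : ℝ} (ha : 0 < a) :
    Real.log (RCLike.re A.det) ≤
      Fintype.card n * Real.log a + (RCLike.re A.trace - Fintype.card n * a) / a := by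
  rw [hA.isHermitian.det_eq_prod_eigenvalues, hA.isHermitian.trace_eq_sum_eigenvalues,
    ← RCLike.ofReal_prod, ← RCLike.ofReal_sum, RCLike.ofReal_re, RCLike.ofReal_re,
    Real.log_prod fun i _ => (hA.eigenvalues_pos i).ne']
  calc ∑ i, Real.log (hA.isHermitian.eigenvalues i)
      ≤ ∑ i, (Real.log a + (hA.isHermitian.eigenvalues i - a) / a) :=
        Finset.sum_le_sum fun i _ => Real.log_le_log_add_sub_div ha (hA.eigenvalues_pos i)
    _ = _ := by
      rw [Finset.sum_add_distrib, ← Finset.sum_div, Finset.sum_sub_distrib]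
      simp

theorem PosSemidef.log_det_one_add_smul_le {P : Matrix n n 𝕜} (hP : P.PosSemidef)
    {κ c : ℝ} (hκ : 0 ≤ κ) (hc : 0 < 1 + κ * c) :
    Real.log (RCLike.re (1 + (κ : 𝕜) • P).det) ≤
      Fintype.card n * Real.log (1 + κ * c) +
        κ * (RCLike.re P.trace - Fintype.card n * c) / (1 + κ * c) := by
  have hA : (1 + (κ : 𝕜) • P).PosDef :=
    PosDef.one.add_posSemidef (hP.smul (RCLike.ofReal_nonneg.mpr hκ))
  convert hA.log_det_le hc using 3
  simp only [trace_add, trace_one, trace_smul, map_add, RCLike.natCast_re, smul_eq_mul,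
    RCLike.re_ofReal_mul]
  ring

end Matrix

/-- Jensen-type bound on the average spectral efficiency: if `P(ω)` is positive
semidefinite for all `ω` and `κ ≥ 0`, then
`𝔼[log₂ det(I + κ P)] ≤ M log₂(1 + κ 𝔼[tr P] / M)`. Applied with
`P = (WᴴHV)(WᴴHV)ᴴ`, this upper-bounds the average SE of single-user SVD precoding
by `M log₂(1 + κ tr(Σ̄)/M)`. -/
theorem avg_logb_det_le_of_posSemidef
    {Ω : Type*} [MeasurableSpace Ω] (μ : Measure Ω) [IsProbabilityMeasure μ]
    (M : ℕ) (hM : 1 ≤ M) (κ : ℝ) (hκ : 0 ≤ κ)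
    (P : Ω → Matrix (Fin M) (Fin M) ℂ) (hP : ∀ ω, (P ω).PosSemidef)
    (htr : Integrable (fun ω => (P ω).trace.re) μ)
    (hlog : Integrable
      (fun ω => Real.logb 2 (((1 : Matrix (Fin M) (Fin M) ℂ) + (κ : ℂ) • P ω).det.re)) μ) :
    ∫ ω, Real.logb 2 (((1 : Matrix (Fin M) (Fin M) ℂ) + (κ : ℂ) • P ω).det.re) ∂μ ≤
      (M : ℝ) * Real.logb 2 (1 + κ * (∫ ω, (P ω).trace.re ∂μ) / (M : ℝ)) := by
  set m := ∫ ω, (P ω).trace.re ∂μ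
  have hM₀ : (M : ℝ) ≠ 0 := Nat.cast_ne_zero.mpr (Nat.one_le_iff_ne_zero.mp hM)
  have hm : 0 ≤ m := integral_nonneg fun ω => (Complex.nonneg_iff.mp (hP ω).trace_nonneg).1
  have ha : 0 < 1 + κ * (m / M) := by positivity
  refine integral_le_of_forall_le_add_mul_sub_integral htr hlog
    (s := κ / (1 + κ * (m / M)) / Real.log 2) fun ω => ?_
  have hdet := (hP ω).log_det_one_add_smul_le hκ ha
  rw [Fintype.card_fin] at hdet
  calc Real.logb 2 ((1 + (κ : ℂ) • P ω).det.re)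
      ≤ (M * Real.log (1 + κ * (m / M)) +
          κ * ((P ω).trace.re - M * (m / M)) / (1 + κ * (m / M))) / Real.log 2 :=
        div_le_div_of_nonneg_right hdet (Real.log_nonneg one_le_two)
    _ = M * Real.logb 2 (1 + κ * m / M) +
          κ / (1 + κ * (m / M)) / Real.log 2 * ((P ω).trace.re - m) := by
      rw [mul_div_cancel₀ m hM₀, ← mul_div_assoc, Real.logb]
      ring
end
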